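/- arXiv:1308.3074 — 3 statements merged into one kernel-verified Lean document; each statement's English description precedes it below -/
import Mathlib

section
/- For every n ≥ 4, the graph Q_n is {1,n}-minimal: Q_n is indecomposable and for every proper subset X ⊆ {1,…,n} with {1,n} ⊆ X and |X| ≥ 3, the induced subgraph Q_n[X] is decomposable. -/
open SimpleGraph

variable {V : Type*}

/-- `I` is an interval (module) of `G`: every vertex outside `I` is adjacent
either to all or to none of the vertices of `I`. -/
def IsInterval (G : SimpleGraph V) (I : Set V) : Prop :=
  ∀ x ∉ I, ∀ a ∈ I, ∀ b ∈ I, (G.Adj a x ↔ G.Adj b x)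

/-- A graph is indecomposable if its only intervals are trivial. -/
def Indecomposable (G : SimpleGraph V) : Prop :=
  ∀ I : Set V, IsInterval G I → I = ∅ ∨ I = Set.univ ∨ ∃ x, I = {x}

def Decomposable (G : SimpleGraph V) : Prop := ¬ Indecomposable G

/-- The path graph on `Fin n`; the vertex `(i : Fin n)` represents the
paper's vertex `i+1`, so edges join consecutive indices. -/
def P (n : ℕ) : SimpleGraph (Fin n) :=
  SimpleGraph.fromRel (fun i j => (i : ℕ) + 1 = (j : ℕ))

/-- The graph `Q_n` on `Fin n` (index `i` represents the paper's vertex `i+1`):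
the path on indices `0..n-3` together with the hub index `n-2` (vertex `n-1`)
joined to every index except `n-2` and `n-3`. -/
def Q (n : ℕ) : SimpleGraph (Fin n) :=
  SimpleGraph.fromRel (fun i j =>
    ((i : ℕ) + 1 = (j : ℕ) ∧ (j : ℕ) ≤ n - 3) ∨
    ((i : ℕ) = n - 2 ∧ (j : ℕ) ≠ n - 2 ∧ (j : ℕ) ≠ n - 3))

/-- `Ext(X)`. -/
def ExtSet (G : SimpleGraph V) (X : Set V) : Set V :=
  {v | v ∉ X ∧ Indecomposable (G.induce (X ∪ {v}))}

/-- `⟨X⟩`. -/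
def AngleSet (G : SimpleGraph V) (X : Set V) : Set V :=
  {v | v ∉ X ∧ ((∀ x ∈ X, G.Adj v x) ∨ (∀ x ∈ X, ¬ G.Adj v x))}

/-- `X(u)`: vertices `v ∉ X` such that `{u,v}` is an interval of `G[X ∪ {v}]`. -/
def XSet (G : SimpleGraph V) (X : Set V) (u : V) : Set V :=
  {v | v ∉ X ∧ IsInterval (G.induce (X ∪ {v})) (Subtype.val ⁻¹' {u, v})}

/-- `G` is `{a,b}`-minimal. -/
def IsMinimal (G : SimpleGraph V) (a b : V) : Prop :=
  Indecomposable G ∧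
    ∀ X : Set V, X ⊂ Set.univ → a ∈ X → b ∈ X → 3 ≤ X.ncard →
      Decomposable (G.induce X)


/-!
In `Q n` the path is `0, …, n - 3`, the hub `n - 2` is adjacent to everything but `n - 3`, and
the leaf `n - 1` hangs from the hub.

Indecomposability: a vertex adjacent to one member of an interval and not to another lies in it.
From any two members of an interval this produces two consecutive path vertices, then, moving up
the path, the hub; from the hub and any other member, the leaf, then the whole path.

Minimality: let `X` be proper and contain `0` and `n - 1`. If the hub is missing, the leaf is
isolated in `Q[X]`; if `n - 3` is missing, the hub is universal in `Q[X]`; otherwise some path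
vertex `0 < w < n - 3` is missing, and the path below `w` together with the leaf is a nontrivial
interval of `Q[X]`.
-/

section Intervals

variable {G : SimpleGraph V} {I : Set V}

theorem IsInterval.mem_of_adj_of_not_adj (hI : IsInterval G I) {a b x : V} (ha : a ∈ I)
    (hb : b ∈ I) (hax : G.Adj a x) (hbx : ¬ G.Adj b x) : x ∈ I := by
  by_contra hx
  exact hbx ((hI x hx a ha b hb).mp hax)

theorem indecomposable_of_eq_univ
    (h : ∀ I : Set V, IsInterval G I → I.Nontrivial → I = Set.univ) : Indecomposable G := by
  intro I hI
  by_cases hnt : I.Nontrivial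
  · exact Or.inr (Or.inl (h I hI hnt))
  · rcases (Set.not_nontrivial_iff.mp hnt).eq_empty_or_singleton with h | h
    · exact Or.inl h
    · exact Or.inr (Or.inr h)

theorem IsInterval.decomposable (hI : IsInterval G I) (hnt : I.Nontrivial)
    (hne : I ≠ Set.univ) : Decomposable G := by
  intro h
  rcases h I hI with h | h | ⟨x, rfl⟩
  · exact hnt.nonempty.ne_empty h
  · exact hne h
  · exact hnt.ne_singleton rfl

theorem decomposable_induce_of_interval {X : Set V}
    (hI : ∀ x ∈ X, x ∉ I → ∀ a ∈ X ∩ I, ∀ b ∈ X ∩ I, (G.Adj a x ↔ G.Adj b x))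
    (hnt : (X ∩ I).Nontrivial) (hXI : ¬ X ⊆ I) : Decomposable (G.induce X) := by
  refine IsInterval.decomposable (I := Subtype.val ⁻¹' I) ?_ ?_ ?_
  · intro x hx a ha b hb
    exact hI x x.2 hx a ⟨a.2, ha⟩ b ⟨b.2, hb⟩
  · obtain ⟨a, ⟨haX, haI⟩, b, ⟨hbX, hbI⟩, hab⟩ := hnt
    exact ⟨⟨a, haX⟩, haI, ⟨b, hbX⟩, hbI, fun h => hab (congrArg Subtype.val h)⟩
  · obtain ⟨w, hwX, hwI⟩ := Set.not_subset.mp hXI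
    exact fun h => hwI (Set.eq_univ_iff_forall.mp h ⟨w, hwX⟩)

theorem decomposable_induce_of_adj_all_or_none {X : Set V} {c : V} (hc : c ∈ X)
    (hX : 3 ≤ X.ncard) (h : (∀ x ∈ X, x ≠ c → G.Adj c x) ∨ ∀ x ∈ X, ¬ G.Adj c x) :
    Decomposable (G.induce X) := by
  refine decomposable_induce_of_interval (I := {c}ᶜ) ?_ ?_ fun hsub => hsub hc rfl
  · intro x _ hx a ⟨haX, hac⟩ b ⟨hbX, hbc⟩
    rw [Set.notMem_compl_iff, Set.mem_singleton_iff] at hx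
    subst hx
    rcases h with h | h
    · exact iff_of_true (h a haX hac).symm (h b hbX hbc).symm
    · exact iff_of_false (fun h' => h a haX h'.symm) (fun h' => h b hbX h'.symm)
  · have : 1 < (X \ {c}).ncard := by rw [Set.ncard_sdiff_singleton_of_mem hc]; omega
    exact (Set.one_lt_ncard_iff_nontrivial_and_finite.mp this).1

end Intervals

section Q

variable {n : ℕ} {I : Set (Fin n)}

theorem Q_adj_iff (i j : Fin n) : (Q n).Adj i j ↔
    ((i : ℕ) + 1 = j ∧ (j : ℕ) ≤ n - 3) ∨ ((j : ℕ) + 1 = i ∧ (i : ℕ) ≤ n - 3) ∨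
    ((i : ℕ) = n - 2 ∧ (j : ℕ) ≠ n - 2 ∧ (j : ℕ) ≠ n - 3) ∨
    ((j : ℕ) = n - 2 ∧ (i : ℕ) ≠ n - 2 ∧ (i : ℕ) ≠ n - 3) := by
  simp only [Q, fromRel_adj, ne_eq, ← Fin.val_inj]
  omega

theorem Q_eq_univ_of_hub_mem (hn : 4 ≤ n) (hI : IsInterval (Q n) I) {h y : Fin n}
    (hh : (h : ℕ) = n - 2) (hhI : h ∈ I) (hyI : y ∈ I) (hyh : y ≠ h) : I = Set.univ := by
  have hy := Fin.val_ne_of_ne hyh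
  obtain ⟨z, hz⟩ : ∃ z : Fin n, (z : ℕ) = n - 1 := ⟨⟨n - 1, by omega⟩, rfl⟩
  have hzI : z ∈ I := by
    by_cases hyz : (y : ℕ) = n - 1
    · rwa [← Fin.ext (hyz.trans hz.symm)]
    · exact hI.mem_of_adj_of_not_adj hhI hyI (by rw [Q_adj_iff]; omega)
        (by rw [Q_adj_iff]; omega)
  have hpathI : ∀ v : Fin n, (v : ℕ) ≤ n - 4 → v ∈ I := fun v hv =>
    hI.mem_of_adj_of_not_adj hhI hzI (by rw [Q_adj_iff]; omega) (by rw [Q_adj_iff]; omega)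
  obtain ⟨w, hw⟩ : ∃ w : Fin n, (w : ℕ) = n - 4 := ⟨⟨n - 4, by omega⟩, rfl⟩
  refine Set.eq_univ_of_forall fun v => ?_
  obtain hv | hv | rfl | rfl : (v : ℕ) ≤ n - 4 ∨ (v : ℕ) = n - 3 ∨ v = h ∨ v = z := by
    simp only [Fin.ext_iff]; omega
  · exact hpathI v hv
  · exact hI.mem_of_adj_of_not_adj (hpathI w hw.le) hhI (by rw [Q_adj_iff]; omega)
      (by rw [Q_adj_iff]; omega)
  · exact hhI
  · exact hzI

theorem Q_hub_mem_of_consecutive (hI : IsInterval (Q n) I) {h i j : Fin n}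
    (hh : (h : ℕ) = n - 2) (hi : i ∈ I) (hj : j ∈ I) (hij : (j : ℕ) = i + 1)
    (hjn : (j : ℕ) ≤ n - 3) : h ∈ I := by
  induction hd : n - 3 - (j : ℕ) generalizing i j with
  | zero =>
    exact hI.mem_of_adj_of_not_adj hi hj (by rw [Q_adj_iff]; omega) (by rw [Q_adj_iff]; omega)
  | succ d ih =>
    obtain ⟨k, hk⟩ : ∃ k : Fin n, (k : ℕ) = j + 1 := ⟨⟨j + 1, by omega⟩, rfl⟩
    have hkI : k ∈ I :=
      hI.mem_of_adj_of_not_adj hj hi (by rw [Q_adj_iff]; omega) (by rw [Q_adj_iff]; omega)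
    exact ih hj hkI hk (by omega) (by omega)

theorem Q_hub_mem (hI : IsInterval (Q n) I) {h a b : Fin n} (hh : (h : ℕ) = n - 2)
    (ha : a ∈ I) (hb : b ∈ I) (hab : (a : ℕ) < b) : h ∈ I := by
  obtain rfl | hah := eq_or_ne a h
  · exact ha
  obtain rfl | hbh := eq_or_ne b h
  · exact hb
  have := Fin.val_ne_of_ne hah
  have := Fin.val_ne_of_ne hbh
  by_cases hbz : (b : ℕ) = n - 1
  · by_cases ha3 : (a : ℕ) = n - 3
    · exact hI.mem_of_adj_of_not_adj hb ha (by rw [Q_adj_iff]; omega) (by rw [Q_adj_iff]; omega)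
    · obtain ⟨k, hk⟩ : ∃ k : Fin n, (k : ℕ) = a + 1 := ⟨⟨a + 1, by omega⟩, rfl⟩
      have hkI : k ∈ I :=
        hI.mem_of_adj_of_not_adj ha hb (by rw [Q_adj_iff]; omega) (by rw [Q_adj_iff]; omega)
      exact Q_hub_mem_of_consecutive hI hh ha hkI hk (by omega)
  by_cases hb1 : (b : ℕ) = a + 1
  · exact Q_hub_mem_of_consecutive hI hh ha hb hb1 (by omega)
  by_cases hb3 : (b : ℕ) = n - 3
  · exact hI.mem_of_adj_of_not_adj ha hb (by rw [Q_adj_iff]; omega) (by rw [Q_adj_iff]; omega)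
  obtain ⟨k, hk⟩ : ∃ k : Fin n, (k : ℕ) = b + 1 := ⟨⟨b + 1, by omega⟩, rfl⟩
  have hkI : k ∈ I :=
    hI.mem_of_adj_of_not_adj hb ha (by rw [Q_adj_iff]; omega) (by rw [Q_adj_iff]; omega)
  exact Q_hub_mem_of_consecutive hI hh hb hkI hk (by omega)

theorem Q_indecomposable (hn : 4 ≤ n) : Indecomposable (Q n) := by
  refine indecomposable_of_eq_univ fun I hI hnt => ?_
  have ⟨a, ha, b, hb, hab⟩ := hnt
  obtain ⟨h, hh⟩ : ∃ h : Fin n, (h : ℕ) = n - 2 := ⟨⟨n - 2, by omega⟩, rfl⟩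
  have hhI : h ∈ I := by
    rcases lt_or_gt_of_ne (Fin.val_ne_of_ne hab) with hlt | hlt
    · exact Q_hub_mem hI hh ha hb hlt
    · exact Q_hub_mem hI hh hb ha hlt
  obtain ⟨y, hyI, hyh⟩ := hnt.exists_ne h
  exact Q_eq_univ_of_hub_mem hn hI hh hhI hyI hyh

theorem Q_induce_decomposable (hn : 4 ≤ n) {X : Set (Fin n)} (hX : X ≠ Set.univ) {a z : Fin n}
    (ha : (a : ℕ) = 0) (hz : (z : ℕ) = n - 1) (haX : a ∈ X) (hzX : z ∈ X) (h3 : 3 ≤ X.ncard) :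
    Decomposable ((Q n).induce X) := by
  obtain ⟨h, hh⟩ : ∃ h : Fin n, (h : ℕ) = n - 2 := ⟨⟨n - 2, by omega⟩, rfl⟩
  by_cases hhX : h ∉ X
  · refine decomposable_induce_of_adj_all_or_none hzX h3 (Or.inr fun x hx hzx => hhX ?_)
    rw [Q_adj_iff] at hzx
    rwa [← Fin.ext (show (x : ℕ) = h by omega)]
  rw [not_not] at hhX
  obtain ⟨e, he⟩ : ∃ e : Fin n, (e : ℕ) = n - 3 := ⟨⟨n - 3, by omega⟩, rfl⟩
  have hval_ne {x y : Fin n} (hx : x ∈ X) (hy : y ∉ X) : (x : ℕ) ≠ y :=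
    Fin.val_ne_of_ne fun hxy => hy (hxy ▸ hx)
  by_cases heX : e ∉ X
  · refine decomposable_induce_of_adj_all_or_none hhX h3 (Or.inl fun x hx hxh => ?_)
    have := hval_ne hx heX
    have := Fin.val_ne_of_ne hxh
    rw [Q_adj_iff]; omega
  rw [not_not] at heX
  obtain ⟨w, hwX⟩ := (Set.ne_univ_iff_exists_notMem X).mp hX
  have := hval_ne haX hwX; have := hval_ne hzX hwX
  have := hval_ne hhX hwX; have := hval_ne heX hwX
  refine decomposable_induce_of_interval (I := {v : Fin n | (v : ℕ) < w ∨ (v : ℕ) = n - 1}) ?_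
    ⟨a, ⟨haX, Or.inl (by omega)⟩, z, ⟨hzX, Or.inr hz⟩, fun haz => by omega⟩
    fun hsub => (hsub hhX : (h : ℕ) < w ∨ (h : ℕ) = n - 1).elim (by omega) (by omega)
  intro x hx hxI b ⟨_, hbI⟩ c ⟨_, hcI⟩
  have := hval_ne hx hwX
  simp only [Set.mem_ofPred_eq] at hxI hbI hcI
  rw [Q_adj_iff, Q_adj_iff]
  omega

end Q

theorem Q_minimal (n : ℕ) (hn : 4 ≤ n) :
    IsMinimal (Q n) (⟨0, by omega⟩ : Fin n) (⟨n - 1, by omega⟩ : Fin n) :=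
  ⟨Q_indecomposable hn, fun _ hX h0 hz h3 => Q_induce_decomposable hn hX.ne rfl rfl h0 hz h3⟩
end

section
/- For every n ≥ 6, the indecomposability graph of the path P_n has edge set exactly { {1,2}, {1,n}, {n−1,n} }; that is, for distinct vertices x, y of P_n, the induced subgraph P_n − {x,y} is indecomposable if and only if {x,y} is one of {1,2}, {1,n}, {n−1,n}. -/
open SimpleGraph

variable {V : Type*}

/-!
Since a path is connected, a nonempty proper interval `I` of `P_m` has a neighbour `w` outside
it, and then `I` lies in the neighbourhood of `w`. That neighbourhood has at most two vertices, and
a vertex at distance 2 from `w` is adjacent to exactly one of them, so `P_m` is indecomposable for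
`m ≥ 4`. Deleting `{1, 2}`, `{1, n}` or `{n - 1, n}` leaves a copy of `P_{n-2}`. Any other pair
splits the path into at least two runs of total length `n - 2 ≥ 4`, and a run with at least two
vertices is then a nontrivial interval.
-/

section Intervals

variable {W : Type*} {G : SimpleGraph V} {H : SimpleGraph W}

theorem indecomposable_iff :
    Indecomposable G ↔
      ∀ I, IsInterval G I → ∀ a ∈ I, ∀ b ∈ I, ∀ c ∉ I, a = b := by
  constructor
  · intro hG I hI a ha b hb c hc
    rcases hG I hI with rfl | rfl | ⟨x, rfl⟩
    · exact absurd ha (Set.notMem_empty a)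
    · exact absurd (Set.mem_univ c) hc
    · exact ha.trans hb.symm
  · intro hG I hI
    rcases I.eq_empty_or_nonempty with hempty | ⟨a, ha⟩
    · exact Or.inl hempty
    by_cases huniv : I = Set.univ
    · exact Or.inr (Or.inl huniv)
    obtain ⟨c, hc⟩ := (Set.ne_univ_iff_exists_notMem I).1 huniv
    exact Or.inr (Or.inr ⟨a, Set.eq_singleton_iff_unique_mem.2
      ⟨ha, fun b hb => hG I hI b hb a ha c hc⟩⟩)

theorem IsInterval.preimage (f : G ↪g H) {I : Set W} (hI : IsInterval H I) :
    IsInterval G (f ⁻¹' I) := fun x hx a ha b hb => by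
  simpa only [f.map_adj_iff] using hI (f x) hx (f a) ha (f b) hb

theorem Indecomposable.of_iso (e : G ≃g H) (hG : Indecomposable G) : Indecomposable H := by
  rw [indecomposable_iff] at hG ⊢
  intro I hI a ha b hb c hc
  have hpre := hI.preimage e.toEmbedding
  apply e.symm.injective
  exact hG _ hpre (e.symm a) (by simpa using ha) (e.symm b) (by simpa using hb) (e.symm c)
    (by simpa using hc)

theorem isInterval_of_forall_not_adj {I : Set V} (h : ∀ a ∈ I, ∀ x ∉ I, ¬ G.Adj a x) :
    IsInterval G I := fun x hx a ha b hb => iff_of_false (h a ha x hx) (h b hb x hx)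

theorem SimpleGraph.Preconnected.exists_adj_mem_notMem (hG : G.Preconnected) {S : Set V}
    {u v : V} (hu : u ∈ S) (hv : v ∉ S) : ∃ a ∈ S, ∃ b ∉ S, G.Adj a b := by
  obtain ⟨p⟩ := hG u v
  obtain ⟨d, -, hd₁, hd₂⟩ := p.exists_boundary_dart S hu hv
  exact ⟨d.fst, hd₁, d.snd, hd₂, d.adj⟩

end Intervals

section Path

variable {n : ℕ}

theorem P_eq_pathGraph (n : ℕ) : P n = pathGraph n := by
  ext i j
  simp only [P, fromRel_adj, pathGraph_adj, ne_eq, Fin.ext_iff]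
  omega

theorem P_adj {i j : Fin n} : (P n).Adj i j ↔ (i : ℕ) + 1 = j ∨ (j : ℕ) + 1 = i := by
  rw [P_eq_pathGraph]
  exact pathGraph_adj

theorem P_induce_adj {S : Set (Fin n)} {v w : S} :
    ((P n).induce S).Adj v w ↔
      ((v : Fin n) : ℕ) + 1 = (w : Fin n) ∨ ((w : Fin n) : ℕ) + 1 = (v : Fin n) :=
  P_adj

theorem indecomposable_P (hn : 4 ≤ n) : Indecomposable (P n) := by
  rw [indecomposable_iff]
  intro I hI p hp q hq x hx
  have hconn : (P n).Preconnected := P_eq_pathGraph n ▸ pathGraph_preconnected n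
  obtain ⟨u, hu, w, hw, huw⟩ := hconn.exists_adj_mem_notMem hp hx
  have hadj_w : ∀ v ∈ I, (P n).Adj v w := fun v hv => (hI w hw u hu v hv).1 huw
  have hpw := P_adj.1 (hadj_w p hp)
  have hqw := P_adj.1 (hadj_w q hq)
  by_contra hpq
  have hpq' : (p : ℕ) ≠ q := Fin.val_ne_of_ne hpq
  -- `p` and `q` are the two neighbours of `w`; a vertex at distance 2 from `w` separates them
  obtain ⟨y, hy⟩ : ∃ y : Fin n, (y : ℕ) + 2 = w ∨ (w : ℕ) + 2 = y := by
    rcases le_or_gt 2 (w : ℕ) with h | h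
    · exact ⟨⟨w - 2, by omega⟩, Or.inl (by simp only; omega)⟩
    · exact ⟨⟨w + 2, by omega⟩, Or.inr rfl⟩
  have hyI : y ∉ I := fun hyI => by have := P_adj.1 (hadj_w y hyI); omega
  have := hI y hyI p hp q hq
  simp only [P_adj] at this
  omega

def isoInduceRun {l m : ℕ} (hlm : l + m ≤ n) {S : Set (Fin n)}
    (hS : ∀ v : Fin n, v ∈ S ↔ l ≤ v ∧ (v : ℕ) < l + m) : P m ≃g (P n).induce S where
  toFun i := ⟨⟨l + i, by omega⟩, (hS _).2 ⟨by simp, by simp⟩⟩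
  invFun v := ⟨v.1 - l, by have := (hS _).1 v.2; omega⟩
  left_inv i := by ext; simp
  right_inv v := by ext; simp only; have := (hS _).1 v.2; omega
  map_rel_iff' := by
    intro i j
    simp only [Equiv.coe_fn_mk, P_induce_adj, P_adj]
    omega

theorem indecomposable_P_induce_run {l m : ℕ} (hm : 4 ≤ m) (hlm : l + m ≤ n) {S : Set (Fin n)}
    (hS : ∀ v : Fin n, v ∈ S ↔ l ≤ v ∧ (v : ℕ) < l + m) :
    Indecomposable ((P n).induce S) :=
  (indecomposable_P hm).of_iso (isoInduceRun hlm hS)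

theorem not_indecomposable_P_induce_of_isolated_run {S : Set (Fin n)} {l r : ℕ}
    (hlr : l + 2 ≤ r) (hr : r ≤ n) (hrun : ∀ v : Fin n, l ≤ v → (v : ℕ) < r → v ∈ S)
    (hisolated : ∀ v ∈ S, (v : ℕ) + 1 ≠ l ∧ (v : ℕ) ≠ r)
    {w : Fin n} (hw : w ∈ S) (hwr : (w : ℕ) < l ∨ r ≤ w) :
    ¬ Indecomposable ((P n).induce S) := by
  set I : Set S := {v | l ≤ (v : Fin n) ∧ ((v : Fin n) : ℕ) < r}
  have hI : IsInterval ((P n).induce S) I := isInterval_of_forall_not_adj fun a ha x hx hax => by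
    have := hisolated x x.2
    simp only [I, Set.mem_ofPred_eq] at ha hx
    rw [P_induce_adj] at hax
    omega
  let a : S := ⟨⟨l, by omega⟩, hrun _ le_rfl (by simp only; omega)⟩
  let b : S := ⟨⟨l + 1, by omega⟩, hrun _ (by simp) (by simp only; omega)⟩
  have ha : a ∈ I := ⟨le_rfl, by simp only [a]; omega⟩
  have hb : b ∈ I := ⟨by simp [b], by simp only [b]; omega⟩
  have hw' : (⟨w, hw⟩ : S) ∉ I := by simp only [I, Set.mem_ofPred_eq]; omega
  intro hG
  have hab : a = b := indecomposable_iff.1 hG I hI a ha b hb _ hw'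
  simp [a, b, Fin.ext_iff] at hab

end Path

/-- Removing `a < b` from `0, …, n - 1` leaves the runs `[0, a)`, `[a + 1, b)`, `[b + 1, n)` of
total length `n - 2 ≥ 4`; unless only one run is nonempty, one of them has length at least 2
and another one supplies `w`. -/
theorem exists_isolated_run {n a b : ℕ} (hn : 6 ≤ n) (hab : a < b) (hb : b < n)
    (h01 : ¬ (a = 0 ∧ b = 1)) (h0n : ¬ (a = 0 ∧ b = n - 1))
    (hnn : ¬ (a = n - 2 ∧ b = n - 1)) :
    ∃ l r w, l + 2 ≤ r ∧ r ≤ n ∧ (∀ k, l ≤ k → k < r → k ≠ a ∧ k ≠ b) ∧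
      (∀ k < n, k ≠ a → k ≠ b → k + 1 ≠ l ∧ k ≠ r) ∧
      w < n ∧ w ≠ a ∧ w ≠ b ∧ (w < l ∨ r ≤ w) := by
  by_cases ha : 2 ≤ a
  · by_cases hba : b = a + 1
    · refine ⟨0, a, a + 2, ?_, ?_, ?_, ?_, ?_⟩ <;> intros <;> omega
    · refine ⟨0, a, a + 1, ?_, ?_, ?_, ?_, ?_⟩ <;> intros <;> omega
  by_cases hb3 : a + 3 ≤ b
  · by_cases ha1 : a = 1
    · refine ⟨a + 1, b, 0, ?_, ?_, ?_, ?_, ?_⟩ <;> intros <;> omega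
    · refine ⟨a + 1, b, b + 1, ?_, ?_, ?_, ?_, ?_⟩ <;> intros <;> omega
  · by_cases hba : b = a + 2
    · refine ⟨b + 1, n, a + 1, ?_, ?_, ?_, ?_, ?_⟩ <;> intros <;> omega
    · refine ⟨b + 1, n, 0, ?_, ?_, ?_, ?_, ?_⟩ <;> intros <;> omega

theorem indec_graph_path (n : ℕ) (hn : 6 ≤ n) (x y : Fin n) (hxy : x ≠ y) :
    Indecomposable ((P n).induce (({x, y} : Set (Fin n))ᶜ)) ↔
      (({x, y} : Set (Fin n)) = {⟨0, by omega⟩, ⟨1, by omega⟩} ∨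
       ({x, y} : Set (Fin n)) = {⟨0, by omega⟩, ⟨n - 1, by omega⟩} ∨
       ({x, y} : Set (Fin n)) = {⟨n - 2, by omega⟩, ⟨n - 1, by omega⟩}) := by
  wlog hlt : x < y generalizing x y
  · rw [Set.pair_comm x y]
    exact this y x hxy.symm (lt_of_le_of_ne (not_lt.1 hlt) hxy.symm)
  rw [Fin.lt_def] at hlt
  have hmem : ∀ v : Fin n, v ∈ ({x, y} : Set (Fin n))ᶜ ↔ (v : ℕ) ≠ x ∧ (v : ℕ) ≠ y := by
    simp [Fin.ext_iff]
  simp only [Set.pair_eq_pair_iff, Fin.ext_iff]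
  constructor
  · contrapose
    intro hne
    obtain ⟨l, r, w, hlr, hr, hrun, hisolated, hw, hwx, hwy, hwr⟩ :=
      exists_isolated_run hn hlt y.isLt (by omega) (by omega) (by omega)
    have hwS : (⟨w, hw⟩ : Fin n) ∈ ({x, y} : Set (Fin n))ᶜ := (hmem _).2 ⟨hwx, hwy⟩
    refine not_indecomposable_P_induce_of_isolated_run hlr hr
      (fun v hlv hvr => (hmem v).2 (hrun v hlv hvr)) (fun v hv => ?_) hwS hwr
    exact hisolated v v.isLt ((hmem v).1 hv).1 ((hmem v).1 hv).2
  · rintro (h | h | h)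
    · exact indecomposable_P_induce_run (l := 2) (m := n - 2) (by omega) (by omega)
        fun v => by rw [hmem]; omega
    · exact indecomposable_P_induce_run (l := 1) (m := n - 2) (by omega) (by omega)
        fun v => by rw [hmem]; omega
    · exact indecomposable_P_induce_run (l := 0) (m := n - 2) (by omega) (by omega)
        fun v => by rw [hmem]; omega
end

section
/- Let G = (V,E) be a graph and X ⊆ V with |X| ≥ 4 and G[X] indecomposable. If u ∈ X, v ∈ X(u), and w ∈ V \ (X ∪ X(u)), and G[X ∪ {v,w}] is decomposable, then {u,v} is an interval of G[X ∪ {v,w}]. -/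
open SimpleGraph

variable {V : Type*}

/-! Let `I` be a nontrivial proper interval of `G[X ∪ {v, w}]`. Because `G[X]` is indecomposable
and `v` is a twin of `u` over `X`, the only nontrivial intervals of `G[X ∪ {v}]` are `{u, v}` and
`X ∪ {v}`; the trace of `I` on `X ∪ {v}` is one of them or a subsingleton. If `w ∉ I`, then `I`
contains both `u` and `v`, which therefore agree on `w`. If `w ∈ I`, either `I` meets `X` at most
in `u`, and then `w` is a twin of `u` over `X`, i.e. `w ∈ X(u)`; or `I ∩ (X ∪ {v}) = {x}` with
`x ≠ u`, and then `u ∼ w ⇔ u ∼ x ⇔ v ∼ x ⇔ v ∼ w`. -/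

/-- The intervals of `G.induce S`, transported to sets of vertices of `G`. -/
def IsIntervalIn (G : SimpleGraph V) (S I : Set V) : Prop :=
  ∀ x ∈ S \ I, ∀ a ∈ I, ∀ b ∈ I, (G.Adj a x ↔ G.Adj b x)

section IsIntervalIn

variable {G : SimpleGraph V} {S T I J X : Set V} {a b u v w : V}

theorem IsIntervalIn.restrict (h : IsIntervalIn G S I) (hTS : T ⊆ S) :
    IsIntervalIn G T (T ∩ I) :=
  fun x hx a ha b hb => h x ⟨hTS hx.1, fun hxI => hx.2 ⟨hx.1, hxI⟩⟩ a ha.2 b hb.2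

theorem IsIntervalIn.mono (h : IsIntervalIn G S I) (hTS : T ⊆ S) : IsIntervalIn G T I :=
  fun x hx => h x ⟨hTS hx.1, hx.2⟩

theorem isIntervalIn_pair_iff :
    IsIntervalIn G S {a, b} ↔ ∀ x ∈ S \ {a, b}, (G.Adj a x ↔ G.Adj b x) := by
  refine ⟨fun h x hx => h x hx a (by simp) b (by simp), fun h x hx c hc d hd => ?_⟩
  rcases hc with rfl | rfl <;> rcases hd with rfl | rfl
  all_goals first | rfl | exact h x hx | exact (h x hx).symm

theorem IsIntervalIn.pair_of_subset_insert (h : IsIntervalIn G S {a, b})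
    (hw : G.Adj a w ↔ G.Adj b w) (hT : T ⊆ insert w S) : IsIntervalIn G T {a, b} := by
  refine isIntervalIn_pair_iff.2 fun x hx => ?_
  rcases hT hx.1 with rfl | hxS
  · exact hw
  · exact isIntervalIn_pair_iff.1 h x ⟨hxS, hx.2⟩

theorem isInterval_induce_preimage_iff :
    IsInterval (G.induce S) (Subtype.val ⁻¹' J) ↔ IsIntervalIn G S (S ∩ J) := by
  simp only [IsInterval, IsIntervalIn, Subtype.forall, Set.mem_preimage, Set.mem_sdiff,
    Set.mem_inter_iff, SimpleGraph.induce_adj]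
  constructor
  · rintro h x ⟨hxS, hxJ⟩ a ⟨haS, haJ⟩ b ⟨hbS, hbJ⟩
    exact h x hxS (fun hx => hxJ ⟨hxS, hx⟩) a haS haJ b hbS hbJ
  · intro h x hxS hxJ a haS haJ b hbS hbJ
    exact h x ⟨hxS, fun hx => hxJ hx.2⟩ a ⟨haS, haJ⟩ b ⟨hbS, hbJ⟩

theorem isInterval_induce_pair_iff (ha : a ∈ S) (hb : b ∈ S) :
    IsInterval (G.induce S) (Subtype.val ⁻¹' {a, b}) ↔ IsIntervalIn G S {a, b} := by
  rw [isInterval_induce_preimage_iff, Set.inter_eq_right.2 (Set.pair_subset ha hb)]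

theorem indecomposable_iff_subsingleton {H : SimpleGraph V} :
    Indecomposable H ↔ ∀ I, IsInterval H I → I.Subsingleton ∨ I = Set.univ := by
  refine forall₂_congr fun I _ => ?_
  constructor
  · rintro (rfl | h | ⟨x, rfl⟩)
    exacts [Or.inl Set.subsingleton_empty, Or.inr h, Or.inl Set.subsingleton_singleton]
  · rintro (h | h)
    · rcases h.eq_empty_or_singleton with h | h
      exacts [Or.inl h, Or.inr (Or.inr h)]
    · exact Or.inr (Or.inl h)

theorem indecomposable_induce_iff :
    Indecomposable (G.induce S) ↔
      ∀ J ⊆ S, IsIntervalIn G S J → J.Subsingleton ∨ J = S := by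
  rw [indecomposable_iff_subsingleton]
  constructor
  · intro h J hJS hJ
    rw [← Set.inter_eq_right.2 hJS, ← isInterval_induce_preimage_iff] at hJ
    refine (h _ hJ).imp (fun hsub => ?_) (fun huniv => hJS.antisymm fun x hx => ?_)
    · simpa [Subtype.image_preimage_coe, Set.inter_eq_right.2 hJS] using hsub.image Subtype.val
    · simpa using huniv.ge (Set.mem_univ ⟨x, hx⟩)
  · intro h I hI
    have hJS : Subtype.val '' I ⊆ S := Subtype.coe_image_subset S I
    rw [← Set.preimage_image_eq I Subtype.val_injective] at hI ⊢
    rw [isInterval_induce_preimage_iff, Set.inter_eq_right.2 hJS] at hI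
    refine (h _ hJS hI).imp (fun hsub => hsub.preimage Subtype.val_injective) fun hS => ?_
    rw [hS, Subtype.coe_preimage_self]

theorem decomposable_induce_iff :
    Decomposable (G.induce S) ↔
      ∃ I ⊆ S, IsIntervalIn G S I ∧ I.Nontrivial ∧ I ≠ S := by
  simp only [Decomposable, indecomposable_induce_iff, ← Set.not_subsingleton_iff]
  push Not
  rfl

theorem mem_XSet_iff (hu : u ∈ X) :
    v ∈ XSet G X u ↔ v ∉ X ∧ IsIntervalIn G (X ∪ {v}) {u, v} :=
  and_congr_right' (isInterval_induce_pair_iff (Or.inl hu) (Or.inr rfl))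

end IsIntervalIn

section Indecomposable

variable {G : SimpleGraph V} {X I J K : Set V} {a b u v w x : V}

theorem ncard_le_one_or_eq_of_isIntervalIn (hind : Indecomposable (G.induce X)) (hJX : J ⊆ X)
    (hJ : IsIntervalIn G X J) : J.ncard ≤ 1 ∨ J = X := by
  refine (indecomposable_induce_iff.1 hind J hJX hJ).imp_left fun hsub => ?_
  rcases hsub.eq_empty_or_singleton with rfl | ⟨x, rfl⟩ <;> simp

theorem eq_of_isIntervalIn_pair (hind : Indecomposable (G.induce X)) (hX : 3 ≤ X.ncard)
    (ha : a ∈ X) (hb : b ∈ X) (h : IsIntervalIn G X {a, b}) : a = b := by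
  by_contra hab
  rcases ncard_le_one_or_eq_of_isIntervalIn hind (Set.pair_subset ha hb) h with h | h
  · rw [Set.ncard_pair hab] at h
    omega
  · rw [← h, Set.ncard_pair hab] at hX
    omega

theorem not_isIntervalIn_sdiff_singleton (hind : Indecomposable (G.induce X))
    (hX : 3 ≤ X.ncard) (hu : u ∈ X) : ¬ IsIntervalIn G X (X \ {u}) := fun h => by
  rcases ncard_le_one_or_eq_of_isIntervalIn hind Set.sdiff_subset h with h | h
  · rw [Set.ncard_sdiff_singleton_of_mem hu] at h
    omega
  · exact (h.symm ▸ hu : u ∈ X \ {u}).2 rfl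

theorem adj_iff_of_isIntervalIn_pair (hvX : v ∉ X) (huv : IsIntervalIn G (X ∪ {v}) {u, v})
    {y : V} (hy : y ∈ X) (hyu : y ≠ u) : G.Adj u y ↔ G.Adj v y :=
  isIntervalIn_pair_iff.1 huv y ⟨Or.inl hy, by rintro (rfl | rfl) <;> contradiction⟩

theorem eq_of_isIntervalIn_pair_of_isIntervalIn_pair (hind : Indecomposable (G.induce X))
    (hX : 3 ≤ X.ncard) (hx : x ∈ X) (hu : u ∈ X) (hvX : v ∉ X)
    (hxv : IsIntervalIn G (X ∪ {v}) {x, v}) (huv : IsIntervalIn G (X ∪ {v}) {u, v}) : x = u :=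
  eq_of_isIntervalIn_pair hind hX hx hu <| isIntervalIn_pair_iff.2 fun _ hy =>
    (adj_iff_of_isIntervalIn_pair hvX hxv hy.1 fun h => hy.2 (Or.inl h)).trans
      (adj_iff_of_isIntervalIn_pair hvX huv hy.1 fun h => hy.2 (Or.inr h)).symm

theorem IsIntervalIn.mem_of_subset (hK : IsIntervalIn G (X ∪ {v}) K) (hXK : X ⊆ K)
    (hind : Indecomposable (G.induce X)) (hX : 3 ≤ X.ncard) (hu : u ∈ X) (hvX : v ∉ X)
    (huv : IsIntervalIn G (X ∪ {v}) {u, v}) : v ∈ K := by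
  by_contra hvK
  -- `v` sees all of `X` alike, hence so does its twin `u` with all of `X \ {u}`.
  refine not_isIntervalIn_sdiff_singleton hind hX hu ?_
  have hcu : ∀ c ∈ X, c ≠ u → (G.Adj c u ↔ G.Adj u v) := fun c hc hcu => by
    rw [G.adj_comm, adj_iff_of_isIntervalIn_pair hvX huv hc hcu, G.adj_comm]
    exact hK v ⟨Or.inr rfl, hvK⟩ c (hXK hc) u (hXK hu)
  rintro y ⟨hyX, hy⟩ a ⟨haX, hau⟩ b ⟨hbX, hbu⟩
  obtain rfl : y = u := by simpa [hyX] using hy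
  exact (hcu a haX hau).trans (hcu b hbX hbu).symm

theorem IsIntervalIn.subsingleton_or_eq_or_eq_pair (hK : IsIntervalIn G (X ∪ {v}) K)
    (hKS : K ⊆ X ∪ {v}) (hind : Indecomposable (G.induce X)) (hX : 3 ≤ X.ncard) (hu : u ∈ X)
    (hvX : v ∉ X) (huv : IsIntervalIn G (X ∪ {v}) {u, v}) :
    K.Subsingleton ∨ K = X ∪ {v} ∨ K = {u, v} := by
  rcases indecomposable_induce_iff.1 hind (X ∩ K) Set.inter_subset_left
    (hK.restrict Set.subset_union_left) with hsub | hXK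
  · by_cases hvK : v ∈ K
    · rcases (X ∩ K).eq_empty_or_nonempty with h0 | ⟨x, hxX, hxK⟩
      · refine Or.inl ((Set.subsingleton_singleton (a := v)).anti fun y hy => ?_)
        exact (hKS hy).resolve_left fun hyX =>
          Set.eq_empty_iff_forall_notMem.1 h0 y ⟨hyX, hy⟩
      · have hKx : K = {x, v} := Set.Subset.antisymm
          (fun y hy => (hKS hy).imp (fun hyX => hsub ⟨hyX, hy⟩ ⟨hxX, hxK⟩) id)
          (Set.pair_subset hxK hvK)
        rw [hKx] at hK ⊢
        rw [eq_of_isIntervalIn_pair_of_isIntervalIn_pair hind hX hxX hu hvX hK huv]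
        exact Or.inr (Or.inr rfl)
    · exact Or.inl (hsub.anti fun y hy => ⟨(hKS hy).resolve_right fun h => hvK (h ▸ hy), hy⟩)
  · have hXK : X ⊆ K := fun y hy => (hXK.ge hy).2
    refine Or.inr (Or.inl (hKS.antisymm (Set.union_subset hXK ?_)))
    exact Set.singleton_subset_iff.2 (hK.mem_of_subset hXK hind hX hu hvX huv)

theorem IsIntervalIn.isIntervalIn_pair_of_inter_subset (hI : IsIntervalIn G (X ∪ {v, w}) I)
    (hIS : I ⊆ X ∪ {v, w}) (hInt : I.Nontrivial) (hwI : w ∈ I) (hXI : X ∩ I ⊆ {u})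
    (hvX : v ∉ X) (huv : IsIntervalIn G (X ∪ {v}) {u, v}) :
    IsIntervalIn G (X ∪ {w}) {u, w} := by
  obtain ⟨z, hzI, hzw⟩ := hInt.exists_ne w
  have hz : ∀ y ∈ X, y ≠ u → (G.Adj u y ↔ G.Adj z y) := by
    rcases hIS hzI with hzX | rfl | rfl
    · obtain rfl : z = u := hXI ⟨hzX, hzI⟩
      exact fun _ _ _ => Iff.rfl
    · exact fun y hy hyu => adj_iff_of_isIntervalIn_pair hvX huv hy hyu
    · exact absurd rfl hzw
  refine isIntervalIn_pair_iff.2 fun y ⟨hyS, hy⟩ => ?_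
  have hyX : y ∈ X := hyS.resolve_right fun h => hy (Or.inr h)
  have hyu : y ≠ u := fun h => hy (Or.inl h)
  have hyI : y ∉ I := fun h => hyu (hXI ⟨hyX, h⟩)
  exact (hz y hyX hyu).trans (hI y ⟨Or.inl hyX, hyI⟩ z hzI w hwI)

theorem IsIntervalIn.adj_iff_of_nontrivial (hI : IsIntervalIn G (X ∪ {v, w}) I)
    (hIS : I ⊆ X ∪ {v, w}) (hInt : I.Nontrivial) (hIne : I ≠ X ∪ {v, w})
    (hind : Indecomposable (G.induce X)) (hX : 3 ≤ X.ncard) (hu : u ∈ X) (hvX : v ∉ X)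
    (huv : IsIntervalIn G (X ∪ {v}) {u, v}) (huw : ¬ IsIntervalIn G (X ∪ {w}) {u, w}) :
    G.Adj u w ↔ G.Adj v w := by
  have hsub : X ∪ {v} ⊆ X ∪ {v, w} := Set.union_subset_union_right X (by simp)
  rcases em' (w ∈ I) with hwI | hwI
  · have hIS' : I ⊆ X ∪ {v} := fun y hy => by
      rcases hIS hy with hyX | rfl | rfl
      exacts [Or.inl hyX, Or.inr rfl, absurd hy hwI]
    have huvI : u ∈ I ∧ v ∈ I := by
      rcases (hI.mono hsub).subsingleton_or_eq_or_eq_pair hIS' hind hX hu hvX huv with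
        h | rfl | rfl
      · exact absurd h hInt.not_subsingleton
      · exact ⟨Or.inl hu, Or.inr rfl⟩
      · exact ⟨Or.inl rfl, Or.inr rfl⟩
    exact hI w ⟨Or.inr (Or.inr rfl), hwI⟩ u huvI.1 v huvI.2
  obtain ⟨x, ⟨hxX, hxI⟩, hxu⟩ := Set.not_subset.1 fun hXI =>
    huw (hI.isIntervalIn_pair_of_inter_subset hIS hInt hwI hXI hvX huv)
  rcases (hI.restrict hsub).subsingleton_or_eq_or_eq_pair Set.inter_subset_left hind hX hu hvX
    huv with h | h | h
  · have hIx : ∀ y ∈ X ∪ {v}, y ∈ I → y = x := fun y hy hyI =>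
      h ⟨hy, hyI⟩ ⟨Or.inl hxX, hxI⟩
    have huI : u ∉ I := fun huI => hxu (hIx u (Or.inl hu) huI).symm
    have hvI : v ∉ I := fun hvI => hvX (hIx v (Or.inr rfl) hvI ▸ hxX)
    calc G.Adj u w ↔ G.Adj u x := by
          rw [G.adj_comm u w, G.adj_comm u x]
          exact hI u ⟨hsub (Or.inl hu), huI⟩ w hwI x hxI
      _ ↔ G.Adj v x := adj_iff_of_isIntervalIn_pair hvX huv hxX hxu
      _ ↔ G.Adj v w := by
          rw [G.adj_comm v w, G.adj_comm v x]
          exact hI v ⟨hsub (Or.inr rfl), hvI⟩ x hxI w hwI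
  · refine absurd (hIS.antisymm fun y hy => ?_) hIne
    rcases hy with hyX | rfl | rfl
    · exact (h.ge (Or.inl hyX)).2
    · exact (h.ge (Or.inr rfl)).2
    · exact hwI
  · rcases h.le ⟨Or.inl hxX, hxI⟩ with rfl | rfl
    · exact absurd rfl hxu
    · exact absurd hxX hvX

end Indecomposable

theorem interval_of_XSet_general {V : Type*} (G : SimpleGraph V) (X : Set V)
    (hX : 4 ≤ X.ncard) (hind : Indecomposable (G.induce X))
    (u v w : V) (hu : u ∈ X) (hv : v ∈ XSet G X u) (hw : w ∉ X ∪ XSet G X u)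
    (hdec : Decomposable (G.induce (X ∪ {v, w}))) :
    IsInterval (G.induce (X ∪ {v, w})) (Subtype.val ⁻¹' {u, v}) := by
  obtain ⟨hvX, huv⟩ := (mem_XSet_iff hu).1 hv
  have huw : ¬ IsIntervalIn G (X ∪ {w}) {u, w} := fun h =>
    hw (Or.inr ((mem_XSet_iff hu).2 ⟨fun hwX => hw (Or.inl hwX), h⟩))
  obtain ⟨I, hIS, hI, hInt, hIne⟩ := decomposable_induce_iff.1 hdec
  have hw := hI.adj_iff_of_nontrivial hIS hInt hIne hind (by omega) hu hvX huv huw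
  rw [isInterval_induce_pair_iff (Set.mem_union_left _ hu)
    (Set.mem_union_right _ (Set.mem_insert v _))]
  refine huv.pair_of_subset_insert hw fun y hy => ?_
  rcases hy with hyX | rfl | rfl
  exacts [Or.inr (Or.inl hyX), Or.inr (Or.inr rfl), Or.inl rfl]

theorem interval_of_XSet {V : Type*} [Fintype V] (G : SimpleGraph V) (X : Set V)
    (hX : 4 ≤ X.ncard) (hind : Indecomposable (G.induce X))
    (u v w : V) (hu : u ∈ X) (hv : v ∈ XSet G X u) (hw : w ∉ X ∪ XSet G X u)
    (hdec : Decomposable (G.induce (X ∪ {v, w}))) :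
    IsInterval (G.induce (X ∪ {v, w})) (Subtype.val ⁻¹' {u, v}) :=
  interval_of_XSet_general G X hX hind u v w hu hv hw hdec
end
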